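/- arXiv:1304.2699 — 3 statements merged into one kernel-verified Lean document; each statement's English description precedes it below -/
import Mathlib

section
/- Let s ≥ 0 be a fixed real number. Then uniformly for real x > 1 and n ∈ ℕ, Σ_{k ≤ x, k regular (mod n)} k^s = (x^{s+1}/(s+1)) · ρ(n)/n + O(x^s 3^{ω(n)}), where ω(n) is the number of distinct prime factors of n. -/
open Finset
open scoped Classical

/-- `k` is regular (mod `n`): there is an integer `x` with `k² x ≡ k (mod n)`. -/
def IsRegularMod (k n : ℕ) : Prop := ∃ x : ℤ, (n : ℤ) ∣ (k : ℤ) ^ 2 * x - (k : ℤ)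

/-- `Reg_n`, the set of `k ∈ {1,…,n}` that are regular (mod `n`). -/
noncomputable def Reg (n : ℕ) : Finset ℕ :=
  (Finset.Icc 1 n).filter fun k => IsRegularMod k n

/-!
A positive integer `k` is regular mod `n` exactly when `d = gcd(k, n)` is a unitary divisor of `n`
(`d ∣ n` and `gcd(d, n/d) = 1`), and then `k = d j` with `j` coprime to `n/d`. Detecting that
coprimality by Möbius inversion gives
`∑_{k ≤ x regular} k^s = ∑_{d ∥ n} ∑_{e ∣ n/d} μ(e) ∑_{t ≤ x/(de)} (de t)^s`,
and the case `x = n`, `s = 0` gives `ρ(n)/n = ∑_{d ∥ n} ∑_{e ∣ n/d} μ(e)/(de)`. Comparing each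
inner sum with `∫ t^s` shows that it is `x^{s+1}/((s+1)de)` up to an error of at most `x^s`, so the
total error is at most `x^s ∑_{d ∥ n} 2^{ω(n/d)} ≤ x^s 3^{ω(n)}`: a unitary divisor is determined
by its set of prime factors.
-/

open ArithmeticFunction
open scoped ArithmeticFunction.Moebius

namespace Nat

def unitaryDivisors (n : ℕ) : Finset ℕ := {d ∈ n.divisors | d.Coprime (n / d)}

variable {n d : ℕ}

theorem mem_unitaryDivisors : d ∈ n.unitaryDivisors ↔ (d ∣ n ∧ n ≠ 0) ∧ d.Coprime (n / d) := by
  rw [unitaryDivisors, mem_filter, mem_divisors]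

theorem pos_of_mem_unitaryDivisors (hd : d ∈ n.unitaryDivisors) : 0 < d :=
  pos_of_mem_divisors (filter_subset _ _ hd)

theorem div_ne_zero_of_mem_unitaryDivisors (hd : d ∈ n.unitaryDivisors) : n / d ≠ 0 := by
  obtain ⟨⟨hdn, hn⟩, -⟩ := mem_unitaryDivisors.1 hd
  exact (div_ne_zero_iff_of_dvd hdn).2 ⟨hn, (pos_of_mem_unitaryDivisors hd).ne'⟩

theorem gcd_eq_iff_of_mem_unitaryDivisors {k : ℕ} (hd : d ∈ n.unitaryDivisors) :
    gcd k n = d ↔ d ∣ k ∧ (k / d).Coprime (n / d) := by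
  obtain ⟨⟨hdn, hn⟩, -⟩ := mem_unitaryDivisors.1 hd
  constructor
  · rintro rfl
    exact ⟨gcd_dvd_left k n, coprime_div_gcd_div_gcd (gcd_pos_of_pos_right k (pos_of_ne_zero hn))⟩
  · rintro ⟨hdk, hcop⟩
    rw [← Nat.mul_div_cancel' hdk, ← Nat.mul_div_cancel' hdn, gcd_mul_left, hcop.gcd_eq_one,
      mul_one]

theorem gcd_mem_unitaryDivisors_iff {k : ℕ} (hn : n ≠ 0) :
    gcd k n ∈ n.unitaryDivisors ↔ k.Coprime (n / gcd k n) := by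
  rw [mem_unitaryDivisors, and_iff_right ⟨gcd_dvd_right k n, hn⟩]
  have hsplit := coprime_mul_iff_left (m := k / gcd k n) (n := gcd k n) (k := n / gcd k n)
  rw [Nat.div_mul_cancel (gcd_dvd_left k n)] at hsplit
  rw [hsplit, and_iff_right (coprime_div_gcd_div_gcd (gcd_pos_of_pos_right k (pos_of_ne_zero hn)))]

theorem primeFactors_div_of_mem_unitaryDivisors (hd : d ∈ n.unitaryDivisors) :
    (n / d).primeFactors = n.primeFactors \ d.primeFactors := by
  obtain ⟨⟨hdn, -⟩, hcop⟩ := mem_unitaryDivisors.1 hd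
  conv_rhs => rw [← Nat.mul_div_cancel' hdn, primeFactors_mul (pos_of_mem_unitaryDivisors hd).ne'
    (div_ne_zero_of_mem_unitaryDivisors hd)]
  rw [union_sdiff_cancel_left hcop.disjoint_primeFactors]

theorem dvd_of_primeFactors_eq_of_mem_unitaryDivisors {d' : ℕ} (hd : d ∈ n.unitaryDivisors)
    (hd' : d' ∈ n.unitaryDivisors) (h : d.primeFactors = d'.primeFactors) : d ∣ d' := by
  obtain ⟨⟨hdn, hn⟩, -⟩ := mem_unitaryDivisors.1 hd
  obtain ⟨⟨hd'n, -⟩, hcop'⟩ := mem_unitaryDivisors.1 hd'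
  have hcop : d.Coprime (n / d') := by
    rw [← disjoint_primeFactors (pos_of_mem_unitaryDivisors hd).ne'
      (div_ne_zero_of_mem_unitaryDivisors hd'), h]
    exact hcop'.disjoint_primeFactors
  exact hcop.dvd_of_dvd_mul_right (by rwa [Nat.mul_div_cancel' hd'n])

theorem injOn_primeFactors_unitaryDivisors (n : ℕ) :
    Set.InjOn primeFactors (n.unitaryDivisors : Set ℕ) := fun _ hd _ hd' h =>
  dvd_antisymm (dvd_of_primeFactors_eq_of_mem_unitaryDivisors hd hd' h)
    (dvd_of_primeFactors_eq_of_mem_unitaryDivisors hd' hd h.symm)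

theorem sum_unitaryDivisors_two_pow_le (n : ℕ) :
    ∑ d ∈ n.unitaryDivisors, (2 : ℝ) ^ #(n / d).primeFactors ≤ 3 ^ #n.primeFactors := by
  have hsub : n.unitaryDivisors.image primeFactors ⊆ n.primeFactors.powerset := by
    intro S hS
    obtain ⟨d, hd, rfl⟩ := mem_image.1 hS
    obtain ⟨⟨hdn, hn⟩, -⟩ := mem_unitaryDivisors.1 hd
    exact mem_powerset.2 (primeFactors_mono hdn hn)
  calc ∑ d ∈ n.unitaryDivisors, (2 : ℝ) ^ #(n / d).primeFactors
      = ∑ S ∈ n.unitaryDivisors.image primeFactors, (1 : ℝ) ^ #S * 2 ^ (#n.primeFactors - #S) := by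
        rw [sum_image (injOn_primeFactors_unitaryDivisors n)]
        refine sum_congr rfl fun d hd => ?_
        obtain ⟨⟨hdn, hn⟩, -⟩ := mem_unitaryDivisors.1 hd
        rw [primeFactors_div_of_mem_unitaryDivisors hd, one_pow, one_mul,
          card_sdiff_of_subset (primeFactors_mono hdn hn)]
    _ ≤ ∑ S ∈ n.primeFactors.powerset, (1 : ℝ) ^ #S * 2 ^ (#n.primeFactors - #S) :=
        sum_le_sum_of_subset_of_nonneg hsub fun _ _ _ => by positivity
    _ = 3 ^ #n.primeFactors := by rw [sum_pow_mul_eq_add_pow]; norm_num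

theorem card_divisors_filter_squarefree (hn : n ≠ 0) :
    #{e ∈ n.divisors | Squarefree e} = 2 ^ #n.primeFactors := by
  rw [card_eq_sum_ones, sum_divisors_filter_squarefree hn, factors_eq, ← card_eq_sum_ones,
    card_powerset, List.toFinset_coe, toFinset_factors]

theorem sum_Icc_filter_dvd {M : Type*} [AddCommMonoid M] {c : ℕ} (hc : 0 < c) (N : ℕ)
    (f : ℕ → M) : ∑ k ∈ Icc 1 N with c ∣ k, f k = ∑ t ∈ Icc 1 (N / c), f (c * t) := by
  symm
  refine sum_nbij' (c * ·) (· / c) ?_ ?_ ?_ ?_ fun _ _ => rfl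
  · intro t ht
    simp only [mem_filter, mem_Icc] at ht ⊢
    refine ⟨⟨Nat.mul_pos hc ht.1, ?_⟩, dvd_mul_right c t⟩
    rw [mul_comm, ← le_div_iff_mul_le hc]
    exact ht.2
  · intro k hk
    simp only [mem_filter, mem_Icc] at hk ⊢
    exact ⟨(one_le_div_iff hc).2 (le_of_dvd hk.1.1 hk.2), Nat.div_le_div_right hk.1.2⟩
  · intro t _
    exact Nat.mul_div_cancel_left t hc
  · intro k hk
    exact Nat.mul_div_cancel' (mem_filter.1 hk).2

theorem sum_Icc_one_eq_sum_range {M : Type*} [AddCommMonoid M] (f : ℕ → M) (N : ℕ) :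
    ∑ t ∈ Icc 1 N, f t = ∑ i ∈ range N, f (i + 1) := by
  rw [range_eq_Ico, sum_Ico_add', zero_add, Ico_add_one_right_eq_Icc]

end Nat

theorem sum_divisors_moebius {R : Type*} [Ring R] (n : ℕ) :
    ∑ e ∈ n.divisors, (μ e : R) = if n = 1 then 1 else 0 := by
  have h := congrArg (· n) (coe_moebius_mul_coe_zeta (R := R))
  simpa only [coe_mul_zeta_apply, intCoe_apply, one_apply] using h

theorem sum_divisors_abs_moebius {n : ℕ} (hn : n ≠ 0) :
    ∑ e ∈ n.divisors, |(μ e : ℝ)| = 2 ^ #n.primeFactors := by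
  simp_rw [← Int.cast_abs, abs_moebius]
  push_cast [apply_ite]
  rw [sum_boole]
  exact_mod_cast congrArg (Nat.cast (R := ℝ)) (Nat.card_divisors_filter_squarefree hn)

theorem sum_unitaryDivisors_sum_divisors_abs_moebius_le (n : ℕ) :
    ∑ d ∈ n.unitaryDivisors, ∑ e ∈ (n / d).divisors, |(μ e : ℝ)| ≤ 3 ^ #n.primeFactors := by
  rw [sum_congr rfl fun d hd =>
    sum_divisors_abs_moebius (Nat.div_ne_zero_of_mem_unitaryDivisors hd)]
  exact Nat.sum_unitaryDivisors_two_pow_le n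

theorem sum_Icc_filter_coprime {R : Type*} [CommRing R] {m : ℕ} (hm : m ≠ 0) (M : ℕ)
    (g : ℕ → R) :
    ∑ j ∈ Icc 1 M with j.Coprime m, g j
      = ∑ e ∈ m.divisors, (μ e : R) * ∑ t ∈ Icc 1 (M / e), g (e * t) := by
  have hind : ∀ j, (if j.Coprime m then g j else 0)
      = ∑ e ∈ m.divisors, if e ∣ j then (μ e : R) * g j else 0 := by
    intro j
    have hdiv : {e ∈ m.divisors | e ∣ j} = (j.gcd m).divisors := by
      rw [← Nat.divisors_filter_dvd_of_dvd hm (Nat.gcd_dvd_right j m)]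
      exact filter_congr fun e he => by
        rw [Nat.dvd_gcd_iff, and_iff_left (Nat.dvd_of_mem_divisors he)]
    rw [← sum_filter, hdiv, ← sum_mul, sum_divisors_moebius]
    split_ifs <;> simp_all [Nat.coprime_iff_gcd_eq_one]
  rw [sum_filter, sum_congr rfl fun j _ => hind j, sum_comm]
  refine sum_congr rfl fun e he => ?_
  rw [← sum_filter, ← mul_sum, Nat.sum_Icc_filter_dvd (Nat.pos_of_mem_divisors he)]

theorem isRegularMod_iff_coprime {k n : ℕ} (hn : n ≠ 0) :
    IsRegularMod k n ↔ k.Coprime (n / k.gcd n) := by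
  have hg : 0 < k.gcd n := Nat.gcd_pos_of_pos_right k (Nat.pos_of_ne_zero hn)
  obtain ⟨k', m, hcop, hkg, hng⟩ := Nat.exists_coprime k n
  set g := k.gcd n
  have hkz : (k : ℤ) = k' * g := by exact_mod_cast hkg
  rw [hng, Nat.mul_div_cancel _ hg, ← Nat.isCoprime_iff_coprime]
  simp only [IsRegularMod, Nat.cast_mul]
  constructor
  · rintro ⟨x, hx⟩
    -- cancelling `g` from `g m ∣ g k' (k x - 1)` and then `k'` (coprime to `m`) gives `m ∣ k x - 1`
    have hm : (m : ℤ) ∣ k' * (k' * g * x - 1) := by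
      have hfac : (k : ℤ) ^ 2 * x - k = g * (k' * (k' * g * x - 1)) := by rw [hkz]; ring
      rw [mul_comm (m : ℤ), hfac] at hx
      exact Int.dvd_of_mul_dvd_mul_left (by exact_mod_cast hg.ne') hx
    obtain ⟨y, hy⟩ := (Nat.isCoprime_iff_coprime.2 hcop.symm).dvd_of_dvd_mul_left hm
    exact ⟨x, -y, by linear_combination hy + x * hkz⟩
  · rintro ⟨u, v, huv⟩
    exact ⟨u, -(k' * v), by linear_combination (k : ℤ) * huv - v * m * hkz⟩

theorem isRegularMod_iff_gcd_mem_unitaryDivisors {k n : ℕ} (hn : n ≠ 0) :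
    IsRegularMod k n ↔ k.gcd n ∈ n.unitaryDivisors := by
  rw [isRegularMod_iff_coprime hn, Nat.gcd_mem_unitaryDivisors_iff hn]

theorem sum_Icc_filter_isRegularMod {R : Type*} [AddCommMonoid R] {n : ℕ} (hn : n ≠ 0) (N : ℕ)
    (f : ℕ → R) :
    ∑ k ∈ Icc 1 N with IsRegularMod k n, f k
      = ∑ d ∈ n.unitaryDivisors, ∑ j ∈ Icc 1 (N / d) with j.Coprime (n / d), f (d * j) := by
  rw [filter_congr fun k _ => isRegularMod_iff_gcd_mem_unitaryDivisors hn,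
    ← sum_fiberwise_of_maps_to (g := (Nat.gcd · n)) fun k hk => (mem_filter.1 hk).2]
  refine sum_congr rfl fun d hd => ?_
  have hd0 := Nat.pos_of_mem_unitaryDivisors hd
  rw [filter_filter, filter_congr fun k _ =>
    (and_iff_right_of_imp fun h : k.gcd n = d => h ▸ hd).trans
      (Nat.gcd_eq_iff_of_mem_unitaryDivisors hd), ← filter_filter, sum_filter,
    Nat.sum_Icc_filter_dvd hd0, sum_filter]
  simp only [Nat.mul_div_cancel_left _ hd0]

theorem sum_Icc_filter_isRegularMod_eq_sum_moebius {R : Type*} [CommRing R] {n : ℕ} (hn : n ≠ 0)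
    (N : ℕ) (f : ℕ → R) :
    ∑ k ∈ Icc 1 N with IsRegularMod k n, f k
      = ∑ d ∈ n.unitaryDivisors, ∑ e ∈ (n / d).divisors,
          (μ e : R) * ∑ t ∈ Icc 1 (N / (d * e)), f (d * e * t) := by
  rw [sum_Icc_filter_isRegularMod hn]
  refine sum_congr rfl fun d hd => ?_
  rw [sum_Icc_filter_coprime (Nat.div_ne_zero_of_mem_unitaryDivisors hd)]
  simp only [Nat.div_div_eq_div_mul, mul_assoc]

theorem card_reg_div_eq_sum_moebius {n : ℕ} (hn : n ≠ 0) :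
    ((Reg n).card : ℝ) / n
      = ∑ d ∈ n.unitaryDivisors, ∑ e ∈ (n / d).divisors, (μ e : ℝ) / (d * e : ℕ) := by
  rw [Finset.cast_card, Reg, sum_Icc_filter_isRegularMod_eq_sum_moebius hn, sum_div]
  refine sum_congr rfl fun d hd => ?_
  rw [sum_div]
  refine sum_congr rfl fun e he => ?_
  obtain ⟨⟨hdn, -⟩, -⟩ := Nat.mem_unitaryDivisors.1 hd
  have hde : d * e ∣ n := Nat.mul_dvd_of_dvd_div hdn (Nat.dvd_of_mem_divisors he)
  have hde0 : ((d * e : ℕ) : ℝ) ≠ 0 := by exact_mod_cast ne_zero_of_dvd_ne_zero hn hde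
  rw [sum_const, Nat.card_Icc, add_tsub_cancel_right, nsmul_one, Nat.cast_div hde hde0]
  field_simp

section RpowSums

variable {s : ℝ}

theorem integral_rpow_zero_natCast (hs : 0 ≤ s) (N : ℕ) :
    ∫ t in (0 : ℝ)..N, t ^ s = (N : ℝ) ^ (s + 1) / (s + 1) := by
  rw [integral_rpow (Or.inl (by linarith)), Real.zero_rpow (by linarith), sub_zero]

theorem rpow_add_one_div_le_sum_Icc (hs : 0 ≤ s) (N : ℕ) :
    (N : ℝ) ^ (s + 1) / (s + 1) ≤ ∑ t ∈ Icc 1 N, (t : ℝ) ^ s := by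
  have hmono : MonotoneOn (fun t : ℝ => t ^ s) (Set.Icc 0 (0 + N)) :=
    (Real.monotoneOn_rpow_Ici_of_exponent_nonneg hs).mono Set.Icc_subset_Ici_self
  rw [← integral_rpow_zero_natCast hs, Nat.sum_Icc_one_eq_sum_range]
  simpa using hmono.integral_le_sum

theorem sum_Icc_rpow_le (hs : 0 ≤ s) (N : ℕ) :
    ∑ t ∈ Icc 1 N, (t : ℝ) ^ s ≤ (N : ℝ) ^ (s + 1) / (s + 1) + (N : ℝ) ^ s := by
  have hmono : MonotoneOn (fun t : ℝ => t ^ s) (Set.Icc 0 (0 + N)) :=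
    (Real.monotoneOn_rpow_Ici_of_exponent_nonneg hs).mono Set.Icc_subset_Ici_self
  have hint := hmono.sum_le_integral
  simp only [zero_add] at hint
  -- `0 ^ s` is `1` when `s = 0`, so the shift of the index only gives an inequality
  have hshift := sum_range_succ (fun i : ℕ => (i : ℝ) ^ s) N
  rw [sum_range_succ'] at hshift
  rw [← integral_rpow_zero_natCast hs, Nat.sum_Icc_one_eq_sum_range]
  push_cast at hshift ⊢
  linarith [Real.rpow_nonneg (le_refl (0 : ℝ)) s]

theorem rpow_add_one_div_sub_le (hs : 0 ≤ s) {a b : ℝ} (ha : 0 ≤ a) (hab : a ≤ b) :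
    b ^ (s + 1) / (s + 1) - a ^ (s + 1) / (s + 1) ≤ (b - a) * b ^ s := by
  rw [← sub_div, ← integral_rpow (Or.inl (by linarith)), ← smul_eq_mul,
    ← intervalIntegral.integral_const]
  exact intervalIntegral.integral_mono_on hab
    (intervalIntegral.intervalIntegrable_rpow' (by linarith)) intervalIntegrable_const
    fun t ht => Real.rpow_le_rpow (ha.trans ht.1) ht.2 hs

theorem abs_sum_Icc_floor_rpow_sub_le (hs : 0 ≤ s) {y : ℝ} (hy : 0 ≤ y) :
    |∑ t ∈ Icc 1 ⌊y⌋₊, (t : ℝ) ^ s - y ^ (s + 1) / (s + 1)| ≤ y ^ s := by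
  have hfl : (⌊y⌋₊ : ℝ) ≤ y := Nat.floor_le hy
  have hlow := rpow_add_one_div_le_sum_Icc hs ⌊y⌋₊
  have hup := sum_Icc_rpow_le hs ⌊y⌋₊
  have hgap := rpow_add_one_div_sub_le hs ⌊y⌋₊.cast_nonneg hfl
  have hgap_le : (y - ⌊y⌋₊) * y ^ s ≤ y ^ s := by
    nlinarith [Real.rpow_nonneg hy s, Nat.lt_floor_add_one y]
  have hpow : (⌊y⌋₊ : ℝ) ^ s ≤ y ^ s := Real.rpow_le_rpow ⌊y⌋₊.cast_nonneg hfl hs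
  have hmain : (⌊y⌋₊ : ℝ) ^ (s + 1) / (s + 1) ≤ y ^ (s + 1) / (s + 1) := by
    gcongr
  rw [abs_le]
  constructor <;> linarith

theorem abs_sum_Icc_floor_div_rpow_sub_le (hs : 0 ≤ s) {x : ℝ} (hx : 0 ≤ x) {c : ℕ} (hc : 0 < c) :
    |∑ t ∈ Icc 1 (⌊x⌋₊ / c), ((c * t : ℕ) : ℝ) ^ s - x ^ (s + 1) / (s + 1) / c| ≤ x ^ s := by
  have hc0 : (0 : ℝ) < c := by exact_mod_cast hc
  have hcs : (0 : ℝ) < (c : ℝ) ^ s := Real.rpow_pos_of_pos hc0 s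
  have hscale : x ^ (s + 1) / (s + 1) / c = (c : ℝ) ^ s * ((x / c) ^ (s + 1) / (s + 1)) := by
    rw [Real.div_rpow hx hc0.le, Real.rpow_add_one hc0.ne']
    field_simp
  rw [← Nat.floor_div_natCast, hscale]
  simp only [Nat.cast_mul, Real.mul_rpow hc0.le (Nat.cast_nonneg _), ← mul_sum, ← mul_sub,
    abs_mul, abs_of_pos hcs]
  calc (c : ℝ) ^ s * |∑ t ∈ Icc 1 ⌊x / c⌋₊, (t : ℝ) ^ s - (x / c) ^ (s + 1) / (s + 1)|
      ≤ (c : ℝ) ^ s * (x / c) ^ s :=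
        mul_le_mul_of_nonneg_left (abs_sum_Icc_floor_rpow_sub_le hs (by positivity)) hcs.le
    _ = x ^ s := by rw [← Real.mul_rpow hc0.le (by positivity), mul_div_cancel₀ _ hc0.ne']

end RpowSums

theorem sum_pow_reg_asymptotic (s : ℝ) (hs : 0 ≤ s) :
    ∃ C : ℝ, 0 < C ∧ ∀ x : ℝ, 1 < x → ∀ n : ℕ, 1 ≤ n →
      |(∑ k ∈ (Finset.Icc 1 ⌊x⌋₊).filter fun k => IsRegularMod k n, (k : ℝ) ^ s) -
          x ^ (s + 1) / (s + 1) * (((Reg n).card : ℝ) / n)|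
        ≤ C * x ^ s * 3 ^ n.primeFactors.card := by
  refine ⟨1, one_pos, fun x hx n hn => ?_⟩
  have hn0 : n ≠ 0 := Nat.one_le_iff_ne_zero.1 hn
  have hterm : ∀ d ∈ n.unitaryDivisors, ∀ e ∈ (n / d).divisors,
      |(μ e : ℝ) * ∑ t ∈ Icc 1 (⌊x⌋₊ / (d * e)), ((d * e * t : ℕ) : ℝ) ^ s
        - x ^ (s + 1) / (s + 1) * ((μ e : ℝ) / (d * e : ℕ))| ≤ |(μ e : ℝ)| * x ^ s := by
    intro d hd e he
    rw [mul_div_left_comm, ← mul_sub, abs_mul]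
    exact mul_le_mul_of_nonneg_left (abs_sum_Icc_floor_div_rpow_sub_le hs (by linarith)
      (Nat.mul_pos (Nat.pos_of_mem_unitaryDivisors hd) (Nat.pos_of_mem_divisors he))) (abs_nonneg _)
  rw [sum_Icc_filter_isRegularMod_eq_sum_moebius hn0, card_reg_div_eq_sum_moebius hn0, mul_sum,
    ← sum_sub_distrib, one_mul]
  calc _ ≤ ∑ d ∈ n.unitaryDivisors, ∑ e ∈ (n / d).divisors, |(μ e : ℝ)| * x ^ s := by
        refine (abs_sum_le_sum_abs _ _).trans (sum_le_sum fun d hd => ?_)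
        rw [mul_sum, ← sum_sub_distrib]
        exact (abs_sum_le_sum_abs _ _).trans (sum_le_sum (hterm d hd))
    _ = x ^ s * ∑ d ∈ n.unitaryDivisors, ∑ e ∈ (n / d).divisors, |(μ e : ℝ)| := by
        simp_rw [mul_sum, mul_comm]
    _ ≤ x ^ s * 3 ^ #n.primeFactors := by
        gcongr
        exact sum_unitaryDivisors_sum_divisors_abs_moebius_le n
end

section
/- For every odd n ∈ ℕ, Σ_{k ∈ Reg_n} tan²(kπ/n) = ρ_2(n) − ρ(n), where ρ_s(n) = Σ_{d || n} φ_s(d) with φ_s(n) = Σ_{d|n} d^s μ(n/d), and ρ(n) = ρ_1(n) = #Reg_n. -/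
open Finset Real
open scoped Classical

/-- The unitary divisors of `n`: divisors `d` of `n` with `gcd(d, n/d) = 1`. -/
def unitaryDivisors (n : ℕ) : Finset ℕ := n.divisors.filter fun d => Nat.Coprime d (n / d)

/-- The Jordan function `φ_s(n) = Σ_{d ∣ n} d^s μ(n/d)` for `s ∈ ℕ`. -/
def phiInt (s n : ℕ) : ℤ :=
  ∑ d ∈ n.divisors, ArithmeticFunction.moebius (n / d) * (d : ℤ) ^ s

/-- `ρ_s(n) = Σ_{d ∥ n} φ_s(d)`, the sum over the unitary divisors of `n`. -/
def rhoInt (s n : ℕ) : ℤ := ∑ d ∈ unitaryDivisors n, phiInt s d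

/-!
For odd `m` and `z = exp (2πia/m)`, the alternating geometric sum `S = ∑_{k<m} (-z)^k` satisfies
`(1 + z) S = 2`, and `1 + z = 2 cos(πa/m) e^{πia/m}`, so `sec²(πa/m) = z S²`. Summing over `a` and
using orthogonality of the `m`-th roots of unity gives `∑_{a<m} sec²(πa/m) = m²`, hence
`∑_{k=1}^m tan²(kπ/m) = m² - m`. Grouping `k` by `gcd k m` writes the left side as `∑_{e ∣ m} T e`,
where `T e` sums `tan²(aπ/e)` over the totatives `a` of `e`, and Möbius inversion over the odd
numbers gives `T e = φ₂ e - φ e`. Finally `k` is regular mod `n` iff `gcd k n` is a unitary divisor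
of `n`, so the sum over `Reg n` is `∑_{d ∥ n} T (n/d)` and `#(Reg n) = ∑_{d ∥ n} φ (n/d)`, and
`d ↦ n/d` permutes the unitary divisors.
-/

theorem IsPrimitiveRoot.geom_sum_pow_eq_ite {R : Type*} [CommRing R] [IsDomain R] {ζ : R}
    {m : ℕ} (hζ : IsPrimitiveRoot ζ m) (j : ℕ) :
    ∑ a ∈ range m, (ζ ^ j) ^ a = if m ∣ j then (m : R) else 0 := by
  split_ifs with h
  · simp [(hζ.pow_eq_one_iff_dvd j).2 h]
  · have hne : ζ ^ j - 1 ≠ 0 := sub_ne_zero.2 fun h' => h ((hζ.pow_eq_one_iff_dvd j).1 h')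
    have := geom_sum_mul (ζ ^ j) m
    rw [pow_right_comm, hζ.pow_eq_one, one_pow, sub_self] at this
    exact (mul_eq_zero.1 this).resolve_right hne

theorem one_add_mul_geom_sum_neg {R : Type*} [CommRing R] {z : R} {m : ℕ} (hm : Odd m)
    (hz : z ^ m = 1) : (1 + z) * ∑ k ∈ range m, (-z) ^ k = 2 := by
  have := geom_sum_mul (-z) m
  rw [hm.neg_pow, hz] at this
  linear_combination -this

namespace Complex

theorem two_cos_mul_exp_mul_I (θ : ℂ) : 2 * cos θ * exp (θ * I) = 1 + exp (2 * θ * I) := by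
  rw [two_cos, add_mul, ← exp_add, ← exp_add, add_comm]
  ring_nf
  simp

theorem cos_sq_mul_geom_sum_sq_eq_one {θ : ℂ} {m : ℕ} (hm : Odd m)
    (h : exp (2 * θ * I) ^ m = 1) :
    cos θ ^ 2 * (exp (2 * θ * I) * (∑ k ∈ range m, (-exp (2 * θ * I)) ^ k) ^ 2) = 1 := by
  have hsum := one_add_mul_geom_sum_neg hm h
  rw [← two_cos_mul_exp_mul_I] at hsum
  have hsq : exp (θ * I) ^ 2 = exp (2 * θ * I) := by rw [← exp_nat_mul]; ring_nf
  set S := ∑ k ∈ range m, (-exp (2 * θ * I)) ^ k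
  linear_combination (cos θ * exp (θ * I) * S + 1) / 2 * hsum - cos θ ^ 2 * S ^ 2 * hsq

end Complex

theorem sum_range_neg_one_pow_mul_ite_dvd {R : Type*} [CommRing R] {m k : ℕ} (hm : Odd m)
    (hk : k < m) (c : R) :
    ∑ l ∈ range m, (-1 : R) ^ (k + l) * (if m ∣ 1 + k + l then c else 0) = c := by
  have hdvd : ∀ l ∈ range m, m ∣ 1 + k + l ↔ m - 1 - k = l := by
    intro l hl
    rw [mem_range] at hl
    constructor
    · intro h
      have := Nat.eq_of_dvd_of_lt_two_mul (by omega) h (by omega)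
      omega
    · rintro rfl
      exact ⟨1, by omega⟩
  simp only [mul_ite, mul_zero]
  rw [sum_congr rfl fun l hl => if_congr (hdvd l hl) rfl rfl, sum_ite_eq, if_pos (by simp; omega),
    show k + (m - 1 - k) = m - 1 by omega, (Nat.Odd.sub_odd hm odd_one).neg_one_pow, one_mul]

theorem cos_sq_nat_mul_pi_div_mul_geom_sum_sq_eq_one {m : ℕ} (hm : Odd m) (a : ℕ) :
    (Real.cos (a * π / m) : ℂ) ^ 2 * (Complex.exp (2 * π * Complex.I / m) ^ a *
      (∑ k ∈ range m, (-Complex.exp (2 * π * Complex.I / m) ^ a) ^ k) ^ 2) = 1 := by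
  have hexp : Complex.exp (2 * ((a * π / m : ℝ) : ℂ) * Complex.I) =
      Complex.exp (2 * π * Complex.I / m) ^ a := by
    rw [← Complex.exp_nat_mul]
    push_cast
    ring_nf
  have hroot := (Complex.isPrimitiveRoot_exp m hm.pos.ne').pow_eq_one
  have := Complex.cos_sq_mul_geom_sum_sq_eq_one hm (θ := (a * π / m : ℝ))
    (by rw [hexp, pow_right_comm, hroot, one_pow])
  rwa [← Complex.ofReal_cos, hexp] at this

theorem cos_nat_mul_pi_div_ne_zero {m : ℕ} (hm : Odd m) (a : ℕ) : Real.cos (a * π / m) ≠ 0 :=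
  fun h => by simpa [h] using cos_sq_nat_mul_pi_div_mul_geom_sum_sq_eq_one hm a

theorem sum_range_inv_cos_sq {m : ℕ} (hm : Odd m) :
    ∑ a ∈ range m, (Real.cos (a * π / m) ^ 2)⁻¹ = (m : ℝ) ^ 2 := by
  set ζ := Complex.exp (2 * π * Complex.I / m)
  have hζ : IsPrimitiveRoot ζ m := Complex.isPrimitiveRoot_exp m hm.pos.ne'
  have hterm (a : ℕ) : ((Real.cos (a * π / m) : ℂ) ^ 2)⁻¹ =
      ∑ k ∈ range m, ∑ l ∈ range m, (-1) ^ (k + l) * (ζ ^ (1 + k + l)) ^ a := by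
    rw [inv_eq_of_mul_eq_one_right (cos_sq_nat_mul_pi_div_mul_geom_sum_sq_eq_one hm a), sq,
      sum_mul_sum, mul_sum]
    refine sum_congr rfl fun k _ => (mul_sum ..).trans (sum_congr rfl fun l _ => ?_)
    rw [← pow_mul]
    ring
  apply Complex.ofReal_injective
  simp only [Complex.ofReal_sum, Complex.ofReal_inv, Complex.ofReal_pow, Complex.ofReal_natCast]
  rw [sum_congr rfl fun a _ => hterm a, sum_comm]
  calc ∑ k ∈ range m, ∑ a ∈ range m, ∑ l ∈ range m, (-1) ^ (k + l) * (ζ ^ (1 + k + l)) ^ a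
      = ∑ k ∈ range m, ∑ l ∈ range m,
          (-1) ^ (k + l) * (if m ∣ 1 + k + l then (m : ℂ) else 0) := by
        refine sum_congr rfl fun k _ => sum_comm.trans (sum_congr rfl fun l _ => ?_)
        rw [← mul_sum, hζ.geom_sum_pow_eq_ite]
    _ = (m : ℂ) ^ 2 := by
        rw [sum_congr rfl fun k hk => sum_range_neg_one_pow_mul_ite_dvd hm (mem_range.1 hk) _,
          sum_const, card_range, nsmul_eq_mul, sq]

theorem sum_Icc_one_eq_sum_range {M : Type*} [AddCancelCommMonoid M] {m : ℕ} {f : ℕ → M}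
    (hf : f m = f 0) : ∑ k ∈ Icc 1 m, f k = ∑ k ∈ range m, f k := by
  have hshift : ∑ k ∈ range m, f (k + 1) = ∑ k ∈ Icc 1 m, f k := by
    rw [range_eq_Ico, sum_Ico_add', zero_add, Ico_add_one_right_eq_Icc]
  have h := (sum_range_succ f m).symm.trans (sum_range_succ' f m)
  rw [hf, hshift] at h
  exact (add_right_cancel h).symm

theorem sum_Icc_tan_sq {m : ℕ} (hm : Odd m) :
    ∑ k ∈ Icc 1 m, Real.tan (k * π / m) ^ 2 = (m : ℝ) ^ 2 - m := by
  have hm0 : (m : ℝ) ≠ 0 := Nat.cast_ne_zero.2 hm.pos.ne'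
  have htan (a : ℕ) : Real.tan (a * π / m) ^ 2 = (Real.cos (a * π / m) ^ 2)⁻¹ - 1 := by
    rw [← Real.inv_one_add_tan_sq (cos_nat_mul_pi_div_ne_zero hm a), inv_inv, add_sub_cancel_left]
  rw [sum_Icc_one_eq_sum_range (by simp [mul_div_cancel_left₀ π hm0]),
    sum_congr rfl fun a _ => htan a, sum_sub_distrib, sum_range_inv_cos_sq hm]
  simp

theorem isCoprime_iff_exists_dvd_mul_sub_one {R : Type*} [CommRing R] {a b : R} :
    IsCoprime a b ↔ ∃ x, b ∣ a * x - 1 := by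
  constructor
  · rintro ⟨x, y, h⟩
    exact ⟨x, -y, by linear_combination h⟩
  · rintro ⟨x, y, h⟩
    exact ⟨x, -y, by linear_combination h⟩

theorem isRegularMod_iff_coprime_gcd {k n : ℕ} (hn : 0 < n) :
    IsRegularMod k n ↔ (k.gcd n).Coprime (n / k.gcd n) := by
  have hd : 0 < k.gcd n := Nat.gcd_pos_of_pos_right k hn
  have hcop := Nat.coprime_div_gcd_div_gcd hd
  obtain ⟨c, hc⟩ := Nat.gcd_dvd_left k n
  obtain ⟨e, he⟩ := Nat.gcd_dvd_right k n
  set d := k.gcd n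
  have hkc : k / d = c := by rw [hc, Nat.mul_div_cancel_left _ hd]
  have hne : n / d = e := by rw [he, Nat.mul_div_cancel_left _ hd]
  rw [hkc, hne] at hcop
  rw [hne, ← Nat.coprime_mul_iff_left.trans (and_iff_left hcop), ← hc,
    ← Nat.isCoprime_iff_coprime, isCoprime_iff_exists_dvd_mul_sub_one]
  have hcop' : IsCoprime (e : ℤ) c := Nat.isCoprime_iff_coprime.2 hcop.symm
  refine exists_congr fun x => ?_
  have hfactor : (k : ℤ) ^ 2 * x - k = d * (c * (k * x - 1)) := by
    rw [hc]; push_cast; ring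
  rw [hfactor, he, Nat.cast_mul, mul_dvd_mul_iff_left (by exact_mod_cast hd.ne')]
  exact ⟨hcop'.dvd_of_dvd_mul_left, fun h => h.mul_left _⟩

theorem Reg_eq_filter_gcd_mem_unitaryDivisors {n : ℕ} (hn : 0 < n) :
    Reg n = (Icc 1 n).filter fun k => k.gcd n ∈ unitaryDivisors n := by
  refine filter_congr fun k _ => ?_
  simp [unitaryDivisors, isRegularMod_iff_coprime_gcd hn, Nat.gcd_dvd_right, hn.ne']

theorem div_mem_unitaryDivisors {n d : ℕ} (hd : d ∈ unitaryDivisors n) :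
    n / d ∈ unitaryDivisors n := by
  simp only [unitaryDivisors, mem_filter, Nat.mem_divisors] at hd ⊢
  obtain ⟨⟨hdvd, hn⟩, hcop⟩ := hd
  exact ⟨⟨Nat.div_dvd_of_dvd hdvd, hn⟩, by rwa [Nat.div_div_self hdvd hn, Nat.coprime_comm]⟩

theorem div_div_of_mem_unitaryDivisors {n d : ℕ} (hd : d ∈ unitaryDivisors n) : n / (n / d) = d :=
  have hd := Nat.mem_divisors.1 (mem_filter.1 hd).1
  Nat.div_div_self hd.1 hd.2

theorem sum_unitaryDivisors_div {M : Type*} [AddCommMonoid M] (n : ℕ) (f : ℕ → M) :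
    ∑ d ∈ unitaryDivisors n, f (n / d) = ∑ d ∈ unitaryDivisors n, f d :=
  sum_nbij' (n / ·) (n / ·) (fun _ => div_mem_unitaryDivisors) (fun _ => div_mem_unitaryDivisors)
    (fun _ => div_div_of_mem_unitaryDivisors) (fun _ => div_div_of_mem_unitaryDivisors)
    fun _ _ => rfl

def totatives (q : ℕ) : Finset ℕ := (Icc 1 q).filter (·.Coprime q)

theorem card_totatives (q : ℕ) : #(totatives q) = q.totient := by
  rw [← Nat.filter_coprime_Ico_eq_totient q 1, add_comm, Ico_add_one_right_eq_Icc, totatives]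
  simp only [Nat.coprime_comm]

theorem filter_gcd_eq_image_totatives {m d : ℕ} (hm : 0 < m) (hd : d ∣ m) :
    (Icc 1 m).filter (fun k => k.gcd m = d) = (totatives (m / d)).image (d * ·) := by
  have hd0 : 0 < d := Nat.pos_of_dvd_of_pos hd hm
  obtain ⟨e, rfl⟩ := hd
  ext k
  simp only [totatives, mem_filter, mem_image, mem_Icc, Nat.mul_div_cancel_left _ hd0]
  constructor
  · rintro ⟨⟨hk1, hkm⟩, hg⟩
    obtain ⟨a, rfl⟩ : d ∣ k := hg ▸ Nat.gcd_dvd_left k _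
    rw [Nat.gcd_mul_left, Nat.mul_eq_left hd0.ne'] at hg
    exact ⟨a, ⟨⟨Nat.pos_of_mul_pos_left hk1, Nat.le_of_mul_le_mul_left hkm hd0⟩, hg⟩, rfl⟩
  · rintro ⟨a, ⟨⟨ha1, hae⟩, hcop⟩, rfl⟩
    refine ⟨⟨Nat.mul_pos hd0 ha1, Nat.mul_le_mul_left d hae⟩, ?_⟩
    rw [Nat.gcd_mul_left, hcop.gcd_eq_one, mul_one]

theorem sum_filter_gcd_mem {M : Type*} [AddCommMonoid M] {m : ℕ} (hm : 0 < m) {D : Finset ℕ}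
    (hD : ∀ d ∈ D, d ∣ m) (f : ℕ → M) :
    ∑ k ∈ (Icc 1 m).filter (fun k => k.gcd m ∈ D), f k =
      ∑ d ∈ D, ∑ a ∈ totatives (m / d), f (d * a) := by
  refine (sum_fiberwise_of_maps_to (g := (·.gcd m)) (fun k hk => (mem_filter.1 hk).2) f).symm.trans
    (sum_congr rfl fun d hd => ?_)
  have hd0 : 0 < d := Nat.pos_of_dvd_of_pos (hD d hd) hm
  rw [filter_filter, filter_congr fun k _ => and_iff_right_of_imp fun h : k.gcd m = d => h ▸ hd,
    filter_gcd_eq_image_totatives hm (hD d hd),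
    sum_image fun a _ b _ h => Nat.eq_of_mul_eq_mul_left hd0 h]

theorem natCast_mul_mul_pi_div_eq {m d : ℕ} (hd : d ∣ m) (a : ℕ) :
    ((d * a : ℕ) : ℝ) * π / m = a * π / (m / d : ℕ) := by
  obtain ⟨e, rfl⟩ := hd
  rcases d.eq_zero_or_pos with rfl | hd0
  · simp
  rw [Nat.mul_div_cancel_left _ hd0]
  push_cast
  rw [mul_assoc, mul_div_mul_left _ _ (by positivity)]

noncomputable def totativeTanSqSum (q : ℕ) : ℝ := ∑ a ∈ totatives q, Real.tan (a * π / q) ^ 2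

theorem sum_filter_gcd_mem_tan_sq {m : ℕ} (hm : 0 < m) {D : Finset ℕ} (hD : ∀ d ∈ D, d ∣ m) :
    ∑ k ∈ (Icc 1 m).filter (fun k => k.gcd m ∈ D), Real.tan (k * π / m) ^ 2 =
      ∑ d ∈ D, totativeTanSqSum (m / d) := by
  rw [sum_filter_gcd_mem hm hD]
  exact sum_congr rfl fun d hd => sum_congr rfl fun a _ => by
    rw [natCast_mul_mul_pi_div_eq (hD d hd)]

theorem sum_divisors_totativeTanSqSum {m : ℕ} (hm : Odd m) :
    ∑ e ∈ m.divisors, totativeTanSqSum e = (m : ℝ) ^ 2 - m := by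
  rw [← Nat.sum_div_divisors, ← sum_filter_gcd_mem_tan_sq hm.pos fun _ => Nat.dvd_of_mem_divisors,
    filter_true_of_mem fun k _ => Nat.mem_divisors.2 ⟨Nat.gcd_dvd_right k m, hm.pos.ne'⟩,
    sum_Icc_tan_sq hm]

theorem phiInt_one (m : ℕ) : phiInt 1 m = m.totient := by
  rcases m.eq_zero_or_pos with rfl | hm
  · simp [phiInt]
  have := (ArithmeticFunction.sum_eq_iff_sum_smul_moebius_eq (f := fun n => (n.totient : ℤ))
    (g := fun n => (n : ℤ))).1
    (fun n _ => by exact_mod_cast Nat.sum_totient n) m hm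
  rw [Nat.sum_divisorsAntidiagonal'
    (f := fun x y => ArithmeticFunction.moebius x • (y : ℤ))] at this
  simpa [phiInt] using this

theorem totativeTanSqSum_eq {m : ℕ} (hm : Odd m) :
    totativeTanSqSum m = phiInt 2 m - m.totient := by
  have := (ArithmeticFunction.sum_eq_iff_sum_smul_moebius_eq_on' {q | Odd q}
    (fun _ _ h hb => Odd.of_dvd_nat hb h) (by simp)).1
    (fun q hq => sum_divisors_totativeTanSqSum hq) m hm
  rw [Nat.sum_divisorsAntidiagonal'
    (f := fun x y => ArithmeticFunction.moebius x • ((y : ℝ) ^ 2 - y))] at this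
  rw [← this, ← Int.cast_natCast, ← phiInt_one]
  simp [phiInt, mul_sub]

theorem sum_tan_sq_reg_general (n : ℕ) (hodd : Odd n) :
    ∑ k ∈ Reg n, Real.tan (k * Real.pi / n) ^ 2 =
      (rhoInt 2 n : ℝ) - ((Reg n).card : ℝ) := by
  have hn := hodd.pos
  have hU (d : ℕ) (hd : d ∈ unitaryDivisors n) : d ∣ n :=
    Nat.dvd_of_mem_divisors (mem_filter.1 hd).1
  have hsum : ∑ k ∈ Reg n, Real.tan (k * π / n) ^ 2 =
      ∑ d ∈ unitaryDivisors n, ((phiInt 2 (n / d) : ℝ) - (n / d).totient) := by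
    rw [Reg_eq_filter_gcd_mem_unitaryDivisors hn, sum_filter_gcd_mem_tan_sq hn hU]
    exact sum_congr rfl fun d hd =>
      totativeTanSqSum_eq (hodd.of_dvd_nat (Nat.div_dvd_of_dvd (hU d hd)))
  have hcard : #(Reg n) = ∑ d ∈ unitaryDivisors n, (n / d).totient := by
    rw [card_eq_sum_ones, Reg_eq_filter_gcd_mem_unitaryDivisors hn, sum_filter_gcd_mem hn hU]
    simp only [← card_eq_sum_ones, card_totatives]
  rw [hsum, hcard, sum_sub_distrib, sum_unitaryDivisors_div n fun d => (phiInt 2 d : ℝ), rhoInt]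
  push_cast
  rfl

theorem sum_tan_sq_reg (n : ℕ) (hn : 1 ≤ n) (hodd : Odd n) :
    ∑ k ∈ Reg n, Real.tan (k * Real.pi / n) ^ 2 =
      (rhoInt 2 n : ℝ) - ((Reg n).card : ℝ) :=
  sum_tan_sq_reg_general n hodd
end

section
/- For every n ∈ ℕ, the polynomial Φ^reg_n(x) := Π_{k ∈ Reg_n} (x − exp(2πik/n)) satisfies Φ^reg_n(x) = Π_{d || n} Φ_d(x), where Φ_d is the d-th cyclotomic polynomial and the product on the right runs over the unitary divisors d of n. In particular, the degree of Φ^reg_n is ρ(n). -/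
/-!
An integer `k` is regular (mod `n`) iff `gcd(k², n) ∣ k`, i.e. iff `g = gcd(k, n)` is a unitary
divisor of `n`; since `d ↦ n / d` permutes the unitary divisors, this says that the order
`n / g` of `ζ^k` is a unitary divisor. Hence `k ↦ ζ^k` maps `Reg_n` bijectively onto the
primitive `d`-th roots of unity with `d ‖ n`, and grouping the linear factors of `Φ^reg_n` by `d`
gives `∏_{d ‖ n} Φ_d`.
-/

open Finset Polynomial
open scoped Classical

/-- The analogue `Φ^reg_n(x) = ∏_{k ∈ Reg_n} (x − exp(2πik/n))` of the
cyclotomic polynomial. -/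
noncomputable def cyclotomicReg (n : ℕ) : Polynomial ℂ :=
  ∏ k ∈ Reg n, (X - C (Complex.exp (2 * Real.pi * Complex.I * k / n)))

lemma isRegularMod_iff_gcd_sq_dvd (k n : ℕ) : IsRegularMod k n ↔ Nat.gcd (k ^ 2) n ∣ k := by
  rw [← Int.gcd_natCast_natCast, Int.gcd_dvd_iff, IsRegularMod]
  push_cast
  constructor
  · rintro ⟨x, y, hy⟩
    exact ⟨x, -y, by linear_combination -hy⟩
  · rintro ⟨x, y, hy⟩
    exact ⟨x, -y, by linear_combination -hy⟩

lemma gcd_sq_dvd_iff_coprime {k n : ℕ} (hn : n ≠ 0) :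
    Nat.gcd (k ^ 2) n ∣ k ↔ Nat.Coprime (Nat.gcd k n) (n / Nat.gcd k n) := by
  set g := Nat.gcd k n
  have hgk : g ∣ k := Nat.gcd_dvd_left k n
  have hgn : g ∣ n := Nat.gcd_dvd_right k n
  have hg : 0 < g := Nat.gcd_pos_of_pos_right k (Nat.pos_of_ne_zero hn)
  constructor
  · intro h
    have hgcd : Nat.gcd (k ^ 2) n = g :=
      Nat.dvd_antisymm (Nat.dvd_gcd h (Nat.gcd_dvd_right _ _))
        (Nat.dvd_gcd (hgk.trans (Dvd.intro_left _ (sq k).symm)) hgn)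
    set c := Nat.gcd g (n / g)
    -- `g * c` divides both `k²` and `n`, hence divides `gcd(k², n) = g`
    have hsq : g * c ∣ k ^ 2 := sq k ▸ mul_dvd_mul hgk ((Nat.gcd_dvd_left _ _).trans hgk)
    have hcn : g * c ∣ n := Nat.mul_div_cancel' hgn ▸ mul_dvd_mul_left g (Nat.gcd_dvd_right _ _)
    have : g * c ∣ g * 1 := by simpa [hgcd] using Nat.dvd_gcd hsq hcn
    exact Nat.dvd_one.1 (Nat.dvd_of_mul_dvd_mul_left hg this)
  · intro hcop
    -- `gcd(k, n / g)` divides `gcd(g, n / g) = 1`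
    have hk : Nat.Coprime k (n / g) :=
      Nat.eq_one_of_dvd_one <| hcop ▸ Nat.dvd_gcd
        (Nat.dvd_gcd (Nat.gcd_dvd_left _ _) ((Nat.gcd_dvd_right _ _).trans (Nat.div_dvd_of_dvd hgn)))
        (Nat.gcd_dvd_right _ _)
    have hcd : Nat.Coprime (Nat.gcd (k ^ 2) n) (n / g) :=
      (hk.pow_left 2).coprime_dvd_left (Nat.gcd_dvd_left _ _)
    have : Nat.gcd (k ^ 2) n ∣ g * (n / g) := by
      rw [Nat.mul_div_cancel' hgn]
      exact Nat.gcd_dvd_right _ _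
    exact (hcd.dvd_of_dvd_mul_right this).trans hgk

lemma mem_unitaryDivisors {d n : ℕ} :
    d ∈ unitaryDivisors n ↔ d ∣ n ∧ n ≠ 0 ∧ Nat.Coprime d (n / d) := by
  simp only [unitaryDivisors, mem_filter, Nat.mem_divisors, and_assoc]

lemma isRegularMod_iff_div_gcd_mem_unitaryDivisors {k n : ℕ} (hn : n ≠ 0) :
    IsRegularMod k n ↔ n / Nat.gcd k n ∈ unitaryDivisors n := by
  have hgn : Nat.gcd k n ∣ n := Nat.gcd_dvd_right k n
  rw [isRegularMod_iff_gcd_sq_dvd, gcd_sq_dvd_iff_coprime hn, mem_unitaryDivisors,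
    Nat.div_div_self hgn hn, Nat.coprime_comm]
  exact ⟨fun h => ⟨Nat.div_dvd_of_dvd hgn, hn, h⟩, fun h => h.2.2⟩

lemma Reg_subset_Icc (n : ℕ) : Reg n ⊆ Icc 1 n := filter_subset _ _

lemma mem_Reg_iff {k n : ℕ} (hn : n ≠ 0) :
    k ∈ Reg n ↔ k ∈ Icc 1 n ∧ n / Nat.gcd k n ∈ unitaryDivisors n := by
  rw [Reg, mem_filter, isRegularMod_iff_div_gcd_mem_unitaryDivisors hn]

namespace IsPrimitiveRoot

section Monoid

variable {M : Type*} [CommMonoid M] {ζ : M} {n : ℕ}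

lemma pow_div_gcd (h : IsPrimitiveRoot ζ n) (hn : n ≠ 0) (k : ℕ) :
    IsPrimitiveRoot (ζ ^ k) (n / Nat.gcd k n) := by
  rw [IsPrimitiveRoot.iff_orderOf, (h.isOfFinOrder hn).orderOf_pow, ← h.eq_orderOf, Nat.gcd_comm]

lemma injOn_pow_Icc (h : IsPrimitiveRoot ζ n) : Set.InjOn (ζ ^ ·) (Icc 1 n) := by
  intro i hi j hj e
  rw [coe_Icc, Set.mem_Icc] at hi hj
  have hmod : i ≡ j [MOD n] := by
    rwa [h.eq_orderOf, ← (h.isOfFinOrder (by omega)).pow_eq_pow_iff_modEq]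
  exact hmod.eq_of_abs_lt (by rw [abs_sub_lt_iff]; omega)

end Monoid

variable {R : Type*} [CommRing R] [IsDomain R] {ζ : R} {n : ℕ}

lemma exists_mem_Icc_pow_eq (h : IsPrimitiveRoot ζ n) (hn : n ≠ 0) {μ : R} (hμ : μ ^ n = 1) :
    ∃ k ∈ Icc 1 n, ζ ^ k = μ := by
  have : NeZero n := ⟨hn⟩
  obtain ⟨j, hj, rfl⟩ := h.eq_pow_of_pow_eq_one hμ
  rcases Nat.eq_zero_or_pos j with rfl | hj0
  · exact ⟨n, mem_Icc.2 ⟨by omega, le_rfl⟩, by rw [h.pow_eq_one, pow_zero]⟩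
  · exact ⟨j, mem_Icc.2 ⟨hj0, hj.le⟩, rfl⟩

lemma image_pow_Reg (h : IsPrimitiveRoot ζ n) (hn : n ≠ 0) :
    (Reg n).image (ζ ^ ·) = (unitaryDivisors n).biUnion (primitiveRoots · R) := by
  ext μ
  simp only [mem_image, mem_biUnion]
  constructor
  · rintro ⟨k, hk, rfl⟩
    obtain ⟨-, hd⟩ := (mem_Reg_iff hn).1 hk
    exact ⟨_, hd, (mem_primitiveRoots (Nat.pos_of_mem_divisors (mem_filter.1 hd).1)).2
      (h.pow_div_gcd hn k)⟩
  · rintro ⟨d, hd, hμ⟩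
    have hμd := isPrimitiveRoot_of_mem_primitiveRoots hμ
    obtain ⟨k, hk, rfl⟩ :=
      h.exists_mem_Icc_pow_eq hn ((hμd.pow_eq_one_iff_dvd n).2 (mem_unitaryDivisors.1 hd).1)
    refine ⟨k, (mem_Reg_iff hn).2 ⟨hk, ?_⟩, rfl⟩
    rwa [(h.pow_div_gcd hn k).unique hμd]

lemma prod_Reg_X_sub_C_pow (h : IsPrimitiveRoot ζ n) (hn : n ≠ 0) :
    ∏ k ∈ Reg n, (X - C (ζ ^ k)) = ∏ d ∈ unitaryDivisors n, cyclotomic d R := by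
  have hdisj : (unitaryDivisors n : Set ℕ).PairwiseDisjoint (primitiveRoots · R) :=
    fun _ _ _ _ hde => IsPrimitiveRoot.disjoint hde
  calc ∏ k ∈ Reg n, (X - C (ζ ^ k))
      = ∏ μ ∈ (Reg n).image (ζ ^ ·), (X - C μ) :=
        (prod_image (f := fun μ => X - C μ)
          (h.injOn_pow_Icc.mono (coe_subset.2 (Reg_subset_Icc n)))).symm
    _ = ∏ d ∈ unitaryDivisors n, ∏ μ ∈ primitiveRoots d R, (X - C μ) := by
        rw [h.image_pow_Reg hn, prod_biUnion hdisj]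
    _ = ∏ d ∈ unitaryDivisors n, cyclotomic d R := by
        refine prod_congr rfl fun d hd => ?_
        have hdn : n = n / d * d := (Nat.div_mul_cancel (mem_unitaryDivisors.1 hd).1).symm
        exact (cyclotomic_eq_prod_X_sub_primitiveRoots (h.pow (Nat.pos_of_ne_zero hn) hdn)).symm

end IsPrimitiveRoot

theorem cyclotomicReg_eq_prod (n : ℕ) (hn : 1 ≤ n) :
    cyclotomicReg n = ∏ d ∈ unitaryDivisors n, Polynomial.cyclotomic d ℂ ∧
    (cyclotomicReg n).natDegree = (Reg n).card := by
  have hn0 : n ≠ 0 := by omega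
  have hexp (k : ℕ) : Complex.exp (2 * Real.pi * Complex.I * k / n) =
      Complex.exp (2 * Real.pi * Complex.I / n) ^ k := by
    rw [← Complex.exp_nat_mul]
    ring_nf
  refine ⟨?_, ?_⟩
  · simp only [cyclotomicReg, hexp]
    exact (Complex.isPrimitiveRoot_exp n hn0).prod_Reg_X_sub_C_pow hn0
  · rw [cyclotomicReg, natDegree_prod_of_monic _ _ fun _ _ => monic_X_sub_C _]
    simp only [natDegree_X_sub_C, sum_const, smul_eq_mul, mul_one]
end
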